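/- For every k ∈ {1,2,3}, t ∈ ℝ, and Θ, the vector ṽ_k(Θ,t) is an eigenvector of the momentum operator p̂_k(t) with eigenvalue (−1)^{θ_k} √(p − q(Θ) + θ_k): p̂_k(t) ṽ_k(Θ,t) = (−1)^{θ_k} √(p − q(Θ) + θ_k) · ṽ_k(Θ,t). -/

import Mathlib

open scoped BigOperators
open Finset

/-- Index set: triples Θ = (θ₁,θ₂,θ₃) with θᵢ ∈ {0,1}. -/
abbrev WIdx := Fin 3 → Fin 2

/-- The 8-dimensional state space V = EuclideanSpace ℂ ({0,1}³). -/
abbrev WV := EuclideanSpace ℂ WIdx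

/-- Orthonormal basis vector e_Θ. -/
noncomputable def eV (Θ : WIdx) : WV := EuclideanSpace.single Θ 1

/-- The basis (e_Θ)_Θ of V, as a `Basis`. -/
noncomputable def bV : Module.Basis WIdx ℂ WV := (EuclideanSpace.basisFun WIdx ℂ).toBasis

/-- q(Θ) = θ₁ + θ₂ + θ₃. -/
def qv (Θ : WIdx) : ℕ := ∑ j, (Θ j : ℕ)

/-- Sign factor (−1)^(θ₁ + ⋯ + θ_{i−1}). -/
def sgnBelow (i : Fin 3) (Θ : WIdx) : ℂ :=
  (-1 : ℂ) ^ (∑ j : Fin 3, if (j : ℕ) < (i : ℕ) then (Θ j : ℕ) else 0)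

/-- Sign factor (−1)^(θ₁ + ⋯ + θ_i). -/
def sgnUpTo (i : Fin 3) (Θ : WIdx) : ℂ :=
  (-1 : ℂ) ^ (∑ j : Fin 3, if (j : ℕ) ≤ (i : ℕ) then (Θ j : ℕ) else 0)

/-- A_i⁻ e_Θ = θ_i (−1)^(θ₁+⋯+θ_{i−1}) √(p−q(Θ)+1) e_{Θ[θ_i↦0]}. -/
noncomputable def Aminus (p : ℕ) (i : Fin 3) : WV →ₗ[ℂ] WV :=
  bV.constr ℂ fun Θ =>
    (((Θ i : ℕ) : ℂ) * sgnBelow i Θ *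
      ((Real.sqrt ((p : ℝ) - (qv Θ : ℝ) + 1) : ℝ) : ℂ)) • eV (Function.update Θ i 0)

/-- A_i⁺ e_Θ = (1−θ_i) (−1)^(θ₁+⋯+θ_{i−1}) √(p−q(Θ)) e_{Θ[θ_i↦1]}. -/
noncomputable def Aplus (p : ℕ) (i : Fin 3) : WV →ₗ[ℂ] WV :=
  bV.constr ℂ fun Θ =>
    (((1 : ℂ) - ((Θ i : ℕ) : ℂ)) * sgnBelow i Θ *
      ((Real.sqrt ((p : ℝ) - (qv Θ : ℝ)) : ℝ) : ℂ)) • eV (Function.update Θ i 1)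

/-- Anticommutator {X,Y} = XY + YX. -/
noncomputable def acommOp (X Y : WV →ₗ[ℂ] WV) : WV →ₗ[ℂ] WV := X ∘ₗ Y + Y ∘ₗ X

/-- Commutator [X,Y] = XY − YX. -/
noncomputable def commOp (X Y : WV →ₗ[ℂ] WV) : WV →ₗ[ℂ] WV := X ∘ₗ Y - Y ∘ₗ X

/-- Dimensionless Hamiltonian ĥ = Σᵢ {A_i⁺, A_i⁻}. -/
noncomputable def hOp (p : ℕ) : WV →ₗ[ℂ] WV := ∑ i, acommOp (Aplus p i) (Aminus p i)

/-- Position operator r̂_k(t) = e^{−it} A_k⁺ + e^{it} A_k⁻. -/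
noncomputable def rOp (p : ℕ) (k : Fin 3) (t : ℝ) : WV →ₗ[ℂ] WV :=
  Complex.exp (-(t : ℂ) * Complex.I) • Aplus p k +
    Complex.exp ((t : ℂ) * Complex.I) • Aminus p k

/-- Momentum operator p̂_k(t) = −i (e^{−it} A_k⁺ − e^{it} A_k⁻). -/
noncomputable def pOp (p : ℕ) (k : Fin 3) (t : ℝ) : WV →ₗ[ℂ] WV :=
  (-Complex.I) • (Complex.exp (-(t : ℂ) * Complex.I) • Aplus p k -
    Complex.exp ((t : ℂ) * Complex.I) • Aminus p k)

/-- Levi-Civita symbol ε_{jkl} with ε_{123} = 1 (indices 0,1,2 here). -/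
def eps (j k l : Fin 3) : ℂ :=
  if (j, k, l) = (0, 1, 2) ∨ (j, k, l) = (1, 2, 0) ∨ (j, k, l) = (2, 0, 1) then 1
  else if (j, k, l) = (2, 1, 0) ∨ (j, k, l) = (1, 0, 2) ∨ (j, k, l) = (0, 2, 1) then -1
  else 0

/-- Angular momentum M_j = −i Σ_{k,l} ε_{jkl} {A_k⁺, A_l⁻}. -/
noncomputable def Mop (p : ℕ) (j : Fin 3) : WV →ₗ[ℂ] WV :=
  (-Complex.I) • ∑ k, ∑ l, eps j k l • acommOp (Aplus p k) (Aminus p l)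

/-- Eigenvectors v_k(Θ,t) of the position operator r̂_k(t). -/
noncomputable def vVec (k : Fin 3) (t : ℝ) (Θ : WIdx) : WV :=
  (((Real.sqrt 2)⁻¹ : ℝ) : ℂ) •
    (eV (Function.update Θ k 0) +
      (sgnUpTo k Θ * Complex.exp (-(t : ℂ) * Complex.I)) • eV (Function.update Θ k 1))

/-- Eigenvectors ṽ_k(Θ,t) of the momentum operator p̂_k(t). -/
noncomputable def vTilde (k : Fin 3) (t : ℝ) (Θ : WIdx) : WV :=
  (((Real.sqrt 2)⁻¹ : ℝ) : ℂ) •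
    (eV (Function.update Θ k 0) -
      (Complex.I * sgnUpTo k Θ * Complex.exp (-(t : ℂ) * Complex.I)) • eV (Function.update Θ k 1))

/-- The non-stationary state z = (1/√2)(e_{(0,0,0)} + e_{(0,0,1)}). -/
noncomputable def zState : WV :=
  (((Real.sqrt 2)⁻¹ : ℝ) : ℂ) • (eV ![0, 0, 0] + eV ![0, 0, 1])

/-- The state x₁ = (1/√2)(e_{(0,1,0)} + e_{(1,1,0)}). -/
noncomputable def x1State : WV :=
  (((Real.sqrt 2)⁻¹ : ℝ) : ℂ) • (eV ![0, 1, 0] + eV ![1, 1, 0])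

local notation "⟪" x ", " y "⟫" => @inner ℂ _ _ x y

/-!
On the plane spanned by `e₀ = e_{Θ[θ_k↦0]}` and `e₁ = e_{Θ[θ_k↦1]}` the ladder operators act as
`A_k⁺ e₀ = s λ e₁`, `A_k⁻ e₁ = s λ e₀` (and kill the other vector), with the common sign
`s = (−1)^{θ₁+⋯+θ_{k−1}}` and `λ = √(p − q(Θ) + θ_k)`, because `q(Θ[θ_k↦0]) + 1 = q(Θ[θ_k↦1])`
and `s` does not look at `θ_k`. The momentum operator is therefore a 2 × 2 block, and since the
sign in `ṽ_k(Θ,t)` is `s (−1)^{θ_k}`, the eigenvector equation reduces to `s² = 1`,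
`((−1)^{θ_k})² = 1` and `e^{it} e^{−it} = 1`.
-/

lemma neg_one_pow_mul_neg_one_pow {R : Type*} [Monoid R] [HasDistribNeg R] (n : ℕ) :
    (-1 : R) ^ n * (-1) ^ n = 1 := by
  rw [← pow_add, ← two_mul, pow_mul, neg_one_sq, one_pow]

lemma qv_update (Θ : WIdx) (k : Fin 3) (c : Fin 2) :
    (qv (Function.update Θ k c) : ℝ) = qv Θ - (Θ k : ℕ) + (c : ℕ) := by
  have hsplit : ∀ Ψ : WIdx, qv Ψ = (Ψ k : ℕ) + ∑ j ∈ univ.erase k, (Ψ j : ℕ) := fun Ψ =>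
    (add_sum_erase univ _ (mem_univ k)).symm
  have hrest : ∑ j ∈ univ.erase k, (Function.update Θ k c j : ℕ) = ∑ j ∈ univ.erase k, (Θ j : ℕ) :=
    sum_congr rfl fun j hj => by rw [Function.update_of_ne (ne_of_mem_erase hj)]
  rw [hsplit (Function.update Θ k c), hsplit Θ, hrest, Function.update_self]
  push_cast
  ring

lemma sgnBelow_update_self (Θ : WIdx) (k : Fin 3) (c : Fin 2) :
    sgnBelow k (Function.update Θ k c) = sgnBelow k Θ := by
  unfold sgnBelow
  congr 1
  refine sum_congr rfl fun j _ => ?_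
  split_ifs with hjk
  · rw [Function.update_of_ne (Fin.ne_of_lt hjk)]
  · rfl

lemma sgnBelow_mul_self (k : Fin 3) (Θ : WIdx) : sgnBelow k Θ * sgnBelow k Θ = 1 :=
  neg_one_pow_mul_neg_one_pow _

lemma sgnUpTo_eq_sgnBelow_mul (k : Fin 3) (Θ : WIdx) :
    sgnUpTo k Θ = sgnBelow k Θ * (-1) ^ (Θ k : ℕ) := by
  have hterm : ∀ j : Fin 3, (if (j : ℕ) ≤ k then (Θ j : ℕ) else 0) =
      (if (j : ℕ) < k then (Θ j : ℕ) else 0) + (if k = j then (Θ j : ℕ) else 0) := by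
    intro j
    rcases lt_trichotomy (j : ℕ) k with h | h | h
    · simp [h, h.le, (Fin.ne_of_lt h).symm]
    · simp [Fin.ext h]
    · simp [h.not_gt, h.not_ge, Fin.ne_of_lt h]
  rw [sgnUpTo, sgnBelow, ← pow_add, sum_congr rfl fun j _ => hterm j, sum_add_distrib,
    sum_ite_eq univ k]
  simp

lemma bV_apply (Θ : WIdx) : bV Θ = eV Θ := by
  simp [bV, eV]

lemma Aplus_eV (p : ℕ) (i : Fin 3) (Θ : WIdx) :
    Aplus p i (eV Θ) = ((1 - ((Θ i : ℕ) : ℂ)) * sgnBelow i Θ *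
      ((Real.sqrt (p - qv Θ) : ℝ) : ℂ)) • eV (Function.update Θ i 1) := by
  rw [← bV_apply, Aplus, Module.Basis.constr_basis]

lemma Aminus_eV (p : ℕ) (i : Fin 3) (Θ : WIdx) :
    Aminus p i (eV Θ) = (((Θ i : ℕ) : ℂ) * sgnBelow i Θ *
      ((Real.sqrt (p - qv Θ + 1) : ℝ) : ℂ)) • eV (Function.update Θ i 0) := by
  rw [← bV_apply, Aminus, Module.Basis.constr_basis]

section Ladder

variable (p : ℕ) (k : Fin 3) (Θ : WIdx)

noncomputable def ladderAmp : ℂ := ((Real.sqrt (p - qv Θ + (Θ k : ℕ)) : ℝ) : ℂ)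

lemma Aplus_eV_update_zero :
    Aplus p k (eV (Function.update Θ k 0)) =
      (sgnBelow k Θ * ladderAmp p k Θ) • eV (Function.update Θ k 1) := by
  have harg : (p : ℝ) - qv (Function.update Θ k 0) = p - qv Θ + (Θ k : ℕ) := by
    simp only [qv_update, Fin.val_zero, Nat.cast_zero]
    ring
  rw [Aplus_eV, Function.update_idem, Function.update_self, sgnBelow_update_self, harg, ladderAmp]
  simp

lemma Aplus_eV_update_one : Aplus p k (eV (Function.update Θ k 1)) = 0 := by
  simp [Aplus_eV]

lemma Aminus_eV_update_zero : Aminus p k (eV (Function.update Θ k 0)) = 0 := by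
  simp [Aminus_eV]

lemma Aminus_eV_update_one :
    Aminus p k (eV (Function.update Θ k 1)) =
      (sgnBelow k Θ * ladderAmp p k Θ) • eV (Function.update Θ k 0) := by
  have harg : (p : ℝ) - qv (Function.update Θ k 1) + 1 = p - qv Θ + (Θ k : ℕ) := by
    simp only [qv_update, Fin.val_one, Nat.cast_one]
    ring
  rw [Aminus_eV, Function.update_idem, Function.update_self, sgnBelow_update_self, harg, ladderAmp]
  simp

end Ladder

lemma momentum_two_level_eigen {M : Type*} [AddCommGroup M] [Module ℂ M]
    (Ap Am : M →ₗ[ℂ] M) (e₀ e₁ : M) (s u a : ℂ) (t : ℝ) (hs : s * s = 1) (hu : u * u = 1)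
    (hAp₀ : Ap e₀ = (s * a) • e₁) (hAp₁ : Ap e₁ = 0) (hAm₀ : Am e₀ = 0) (hAm₁ : Am e₁ = (s * a) • e₀) :
    ((-Complex.I) • (Complex.exp (-(t : ℂ) * Complex.I) • Ap - Complex.exp (t * Complex.I) • Am))
        (e₀ - (Complex.I * (s * u) * Complex.exp (-(t : ℂ) * Complex.I)) • e₁) =
      (u * a) • (e₀ - (Complex.I * (s * u) * Complex.exp (-(t : ℂ) * Complex.I)) • e₁) := by
  have hexp : Complex.exp (t * Complex.I) * Complex.exp (-(t : ℂ) * Complex.I) = 1 := by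
    rw [← Complex.exp_add, ← add_mul, add_neg_cancel, zero_mul, Complex.exp_zero]
  simp only [LinearMap.smul_apply, LinearMap.sub_apply, map_sub, map_smul, hAp₀, hAp₁, hAm₀, hAm₁,
    smul_zero, sub_zero, zero_sub, smul_sub, smul_neg, smul_smul]
  match_scalars
  · linear_combination (Complex.I * Complex.exp (-(t : ℂ) * Complex.I) * s * a) * hu
  · linear_combination (-s * s * u * a) * Complex.exp (t * Complex.I) *
        Complex.exp (-(t : ℂ) * Complex.I) * Complex.I_mul_I +
      (u * a * Complex.exp (t * Complex.I) * Complex.exp (-(t : ℂ) * Complex.I)) * hs + (u * a) * hexp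

theorem stmt14_general (p : ℕ) (k : Fin 3) (t : ℝ) (Θ : WIdx) :
    pOp p k t (vTilde k t Θ) =
      (((-1 : ℂ) ^ (Θ k : ℕ)) *
        ((Real.sqrt ((p : ℝ) - (qv Θ : ℝ) + (Θ k : ℕ)) : ℝ) : ℂ)) • vTilde k t Θ := by
  rw [pOp, vTilde, sgnUpTo_eq_sgnBelow_mul, map_smul,
    momentum_two_level_eigen _ _ _ _ _ _ (ladderAmp p k Θ) t (sgnBelow_mul_self k Θ)
      (neg_one_pow_mul_neg_one_pow _) (Aplus_eV_update_zero p k Θ) (Aplus_eV_update_one p k Θ)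
      (Aminus_eV_update_zero p k Θ) (Aminus_eV_update_one p k Θ), smul_comm, ladderAmp]

/-- p̂_k(t) ṽ_k(Θ,t) = (−1)^{θ_k} √(p − q(Θ) + θ_k) ṽ_k(Θ,t). -/
theorem stmt14 (p : ℕ) (hp : 3 ≤ p) (k : Fin 3) (t : ℝ) (Θ : WIdx) :
    pOp p k t (vTilde k t Θ) =
      (((-1 : ℂ) ^ (Θ k : ℕ)) *
        ((Real.sqrt ((p : ℝ) - (qv Θ : ℝ) + (Θ k : ℕ)) : ℝ) : ℂ)) • vTilde k t Θ :=
  stmt14_general p k t Θ
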